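/- arXiv:1607.04144 — 3 statements merged into one kernel-verified Lean document; each statement's English description precedes it below -/
import Mathlib

section
/- For k ≥ 1, complex tuples μ = (μ_1,…,μ_k), complex r, and any nonnegative integer tuple t with |t| ≥ 1, the multiparameter Fuss–Catalan numbers satisfy 𝒜_t(μ, r+1) = 𝒜_t(μ, r) + ∑_{j=1}^{k} 𝒜_{t - e_j}(μ, r + μ_j), where e_j is the j-th standard basis tuple and terms with a negative component are zero. -/
/-!
For `|t| = n + 1` the closed form is `𝒜_t(μ, r) = r / t! · (x - 1)^{\underline{n}}` with `x = t·μ + r`,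
a falling factorial. Passing from `(t, r)` to `(t - e_j, r + μ_j)` leaves `x` unchanged, lowers `n`
by one and divides `t!` by `t_j`, so for `|t| ≥ 2` all three sides share the factor
`(x - 1)^{\underline{|t| - 2}} / t!` and the recurrence reduces to
`(r + 1) x = r (x - |t| + 1) + ∑_j (r + μ_j) t_j`. For `|t| = 1` every term is explicit.
-/

/-- Multiparameter Fuss–Catalan number `𝒜_t(μ, r)`:
`𝒜_0 = 1` and for `|t| > 0`, `𝒜_t(μ, r) = (r/(t_1!⋯t_k!)) ∏_{j=1}^{|t|-1}(t·μ + r - j)`. -/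
noncomputable def mfc {k : ℕ} (μ : Fin k → ℂ) (r : ℂ) (t : Fin k → ℕ) : ℂ :=
  if (∑ i, t i) = 0 then 1
  else r / (∏ i, ((t i).factorial : ℂ)) *
    ∏ j ∈ Finset.Icc 1 ((∑ i, t i) - 1), ((∑ i, (t i : ℂ) * μ i) + r - (j : ℂ))

open Finset Polynomial

theorem prod_Icc_one_sub_eq_descPochhammer_eval {R : Type*} [CommRing R] (x : R) (n : ℕ) :
    ∏ j ∈ Icc 1 n, (x - j) = (descPochhammer R n).eval (x - 1) := by
  induction n with
  | zero => simp
  | succ n ih =>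
    rw [prod_Icc_succ_top (by omega), ih, descPochhammer_succ_eval]
    push_cast; ring

section
variable {ι : Type*} [DecidableEq ι] {t : ι → ℕ} {j : ι}

theorem sub_single_add_single (h : 1 ≤ t j) : t - Pi.single j 1 + Pi.single j 1 = t := by
  ext i
  rcases eq_or_ne i j with rfl | hi <;> simp [*]

variable [Fintype ι]

theorem sum_sub_single (h : 1 ≤ t j) : ∑ i, (t - Pi.single j 1 : ι → ℕ) i = ∑ i, t i - 1 := by
  conv_rhs => rw [← sub_single_add_single h]
  simp [sum_add_distrib]

theorem sum_sub_single_mul {R : Type*} [CommRing R] (h : 1 ≤ t j) (μ : ι → R) :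
    ∑ i, ((t - Pi.single j 1 : ι → ℕ) i : R) * μ i = ∑ i, (t i : R) * μ i - μ j := by
  conv_rhs => rw [← sub_single_add_single h]
  simp [add_mul, sum_add_distrib, Pi.single_apply]

theorem mul_prod_factorial_sub_single (h : 1 ≤ t j) :
    t j * ∏ i, ((t - Pi.single j 1 : ι → ℕ) i).factorial = ∏ i, (t i).factorial := by
  rw [Fintype.prod_eq_mul_prod_compl j, Fintype.prod_eq_mul_prod_compl j (fun i => (t i).factorial),
    ← mul_assoc]
  congr 1
  · simpa using Nat.mul_factorial_pred (by omega : t j ≠ 0)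
  · refine prod_congr rfl fun i hi => ?_
    rw [Pi.sub_apply, Pi.single_eq_of_ne (by simpa using hi), Nat.sub_zero]
end

section
variable {k : ℕ} (μ : Fin k → ℂ) (r : ℂ) {t : Fin k → ℕ}

theorem mfc_of_sum_eq_zero (h : ∑ i, t i = 0) : mfc μ r t = 1 := if_pos h

theorem mfc_of_sum_eq_succ {n : ℕ} (h : ∑ i, t i = n + 1) :
    mfc μ r t = r / (∏ i, ((t i).factorial : ℂ)) *
      (descPochhammer ℂ n).eval (∑ i, (t i : ℂ) * μ i + r - 1) := by
  rw [mfc, if_neg (by omega), h, Nat.add_sub_cancel, prod_Icc_one_sub_eq_descPochhammer_eval]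

theorem mfc_of_sum_eq_one (h : ∑ i, t i = 1) : mfc μ r t = r := by
  have hfact : ∀ i, ((t i).factorial : ℂ) = 1 := fun i => by
    have : t i ≤ 1 := h ▸ single_le_sum (fun i _ => Nat.zero_le (t i)) (mem_univ i)
    interval_cases t i <;> simp
  simp [mfc_of_sum_eq_succ μ r (n := 0) h, hfact]

theorem mfc_sub_single_of_sum_eq_add_two {N : ℕ} (h : ∑ i, t i = N + 2) (j : Fin k)
    (hj : 1 ≤ t j) :
    mfc μ (r + μ j) (t - Pi.single j 1) = (r + μ j) * t j / (∏ i, ((t i).factorial : ℂ)) *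
      (descPochhammer ℂ N).eval (∑ i, (t i : ℂ) * μ i + r - 1) := by
  have hfact : (t j : ℂ) * ∏ i, (((t - Pi.single j 1 : Fin k → ℕ) i).factorial : ℂ) =
      ∏ i, ((t i).factorial : ℂ) := mod_cast mul_prod_factorial_sub_single hj
  have hsum : ∑ i, (t - Pi.single j 1 : Fin k → ℕ) i = N + 1 := by
    rw [sum_sub_single hj, h]; rfl
  have hshift : ∑ i, (t i : ℂ) * μ i - μ j + (r + μ j) - 1 = ∑ i, (t i : ℂ) * μ i + r - 1 := by
    ring
  have htj : (t j : ℂ) ≠ 0 := by exact_mod_cast (by omega : t j ≠ 0)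
  rw [mfc_of_sum_eq_succ μ _ hsum, sum_sub_single_mul hj, hshift, ← hfact,
    mul_comm (r + μ j), mul_div_mul_left _ _ htj]

theorem mfc_recurrence_of_sum_eq_one (h : ∑ i, t i = 1) :
    mfc μ (r + 1) t = mfc μ r t +
      ∑ j : Fin k, (if 1 ≤ t j then mfc μ (r + μ j) (t - Pi.single j 1) else 0) := by
  have hterm : ∀ j, (if 1 ≤ t j then mfc μ (r + μ j) (t - Pi.single j 1) else 0) = t j := by
    intro j
    split_ifs with hj
    · have : t j ≤ 1 := h ▸ single_le_sum (fun i _ => Nat.zero_le (t i)) (mem_univ j)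
      rw [mfc_of_sum_eq_zero _ _ (by rw [sum_sub_single hj, h]), (by omega : t j = 1)]
      simp
    · simp [(by omega : t j = 0)]
  simp only [mfc_of_sum_eq_one μ _ h, hterm]
  rw [← Nat.cast_sum, h, Nat.cast_one]

theorem mfc_recurrence_of_sum_eq_add_two {N : ℕ} (h : ∑ i, t i = N + 2) :
    mfc μ (r + 1) t = mfc μ r t +
      ∑ j : Fin k, (if 1 ≤ t j then mfc μ (r + μ j) (t - Pi.single j 1) else 0) := by
  set m := ∑ i, (t i : ℂ) * μ i
  set F := ∏ i, ((t i).factorial : ℂ)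
  set D := (descPochhammer ℂ N).eval (m + r - 1)
  have hterm : ∀ j, (if 1 ≤ t j then mfc μ (r + μ j) (t - Pi.single j 1) else 0) =
      (r + μ j) * t j / F * D := by
    intro j
    split_ifs with hj
    · exact mfc_sub_single_of_sum_eq_add_two μ r h j hj
    · simp [(by omega : t j = 0)]
  have hleft : mfc μ (r + 1) t = (r + 1) / F * ((m + r) * D) := by
    have hshift : m + (r + 1) - 1 = m + r := by ring
    rw [mfc_of_sum_eq_succ μ _ h, hshift, descPochhammer_succ_left, eval_mul, eval_comp, eval_sub,
      eval_X, eval_one]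
  have hright : mfc μ r t = r / F * (D * (m + r - 1 - N)) := by
    rw [mfc_of_sum_eq_succ μ _ h, descPochhammer_succ_eval]
  have hsum : ∑ j, (r + μ j) * t j = r * (N + 2) + m := by
    simp only [add_mul, sum_add_distrib, ← mul_sum, ← Nat.cast_sum, h, m, mul_comm (μ _)]
    push_cast; ring
  simp only [hterm, ← sum_mul, ← sum_div, hsum, hleft, hright]
  ring
end

theorem mfc_recurrence_general {k : ℕ} (μ : Fin k → ℂ) (r : ℂ)
    (t : Fin k → ℕ) (ht : 1 ≤ ∑ i, t i) :
    mfc μ (r + 1) t =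
      mfc μ r t +
        ∑ j : Fin k,
          (if 1 ≤ t j then mfc μ (r + μ j) (t - Pi.single j 1) else 0) := by
  obtain h | ⟨N, h⟩ : ∑ i, t i = 1 ∨ ∃ N, ∑ i, t i = N + 2 := by
    rcases Nat.lt_or_ge (∑ i, t i) 2 with h | h
    · exact Or.inl (by omega)
    · exact Or.inr ⟨_, (Nat.sub_add_cancel h).symm⟩
  · exact mfc_recurrence_of_sum_eq_one μ r h
  · exact mfc_recurrence_of_sum_eq_add_two μ r h

/-- Multiparameter recurrence: for `|t| ≥ 1`,
`𝒜_t(μ, r+1) = 𝒜_t(μ, r) + ∑_j 𝒜_{t - e_j}(μ, r + μ_j)`,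
where terms with a negative component (i.e. `t j = 0`) are zero. -/
theorem mfc_recurrence {k : ℕ} (hk : 1 ≤ k) (μ : Fin k → ℂ) (r : ℂ)
    (t : Fin k → ℕ) (ht : 1 ≤ ∑ i, t i) :
    mfc μ (r + 1) t =
      mfc μ r t +
        ∑ j : Fin k,
          (if 1 ≤ t j then mfc μ (r + μ j) (t - Pi.single j 1) else 0) :=
  mfc_recurrence_general μ r t ht
end

section
/- Let γ be a complex number with |γ| ≤ 4/5^{5/4}. Then the series x = ∑_{t=0}^∞ A_t(5,1) γ^{4t+1} converges absolutely and its sum x satisfies the Bring–Jerrard quintic equation x^5 - x + γ = 0. -/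
/-!
The coefficients of the powers of `B_p(z) = ∑ₙ A_n(p,1) zⁿ` are the Raney numbers
`R_{p,r}(n) = r/(pn+r) · C(pn+r, n)`. They obey the Pascal-type rule
`R_{p,r+1}(n+1) = R_{p,r}(n+1) + R_{p,r+p}(n)`, and induction on `n` and `r` turns it into the
convolution identity `R_{p,r+s} = R_{p,r} ⋆ R_{p,s}`. Hence, wherever `B_p(z)` converges
absolutely, Cauchy products give `B_p(z)^r = ∑ₙ R_{p,r}(n) zⁿ`, and `R_{p,1}(n+1) = R_{p,p}(n)`
yields `B_p = 1 + z B_p^p`.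

For `p = 5` the ratio of consecutive coefficients shows that at `ρ = 4⁴/5⁵` the sequence
`R_{5,1}(t) ρᵗ (t+1)^{3/2}` is nonincreasing, so the series converges absolutely on the closed
disc `|z| ≤ ρ`. With `x = γ B_5(γ⁴)` the functional equation reads `x⁵ = γ (B_5 - 1) = x - γ`.
-/

/-- Fuss–Catalan number `A_t(5,1) = (1/(4t+1)) · C(5t, t)`, as a complex number. -/
noncomputable def fc5 (t : ℕ) : ℂ := (Nat.choose (5 * t) t : ℂ) / (4 * (t : ℂ) + 1)

open Finset

/-- `R_{p,r}(n)`; the case `n = 0` is split off so that `R_{p,0}(0) = 1` instead of `0/0`. -/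
noncomputable def raney (p r n : ℕ) : ℝ :=
  if n = 0 then 1 else r * (p * n + r).choose n / (p * n + r)

@[simp]
theorem raney_zero_right (p r : ℕ) : raney p r 0 = 1 := if_pos rfl

@[simp]
theorem raney_zero_succ (p n : ℕ) : raney p 0 (n + 1) = 0 := by simp [raney]

theorem raney_succ (p r n : ℕ) :
    raney p r (n + 1) = r * (p * (n + 1) + r).choose (n + 1) / (p * (n + 1) + r) := by
  simp [raney]

theorem raney_nonneg (p r n : ℕ) : 0 ≤ raney p r n := by
  unfold raney; split_ifs <;> positivity

section Raney

variable {p : ℕ}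

theorem raney_succ_succ (hp : 0 < p) (r n : ℕ) :
    raney p (r + 1) (n + 1) = raney p r (n + 1) + raney p (r + p) n := by
  rcases n with _ | n
  · have : (p : ℝ) + r ≠ 0 := by positivity
    simp only [raney, zero_add, one_ne_zero, ↓reduceIte, Nat.cast_add, Nat.cast_one, mul_one,
      Nat.choose_one_right]
    field_simp
  · have key : ((p * (n + 2) + r + 1 : ℕ) : ℝ) * (p * (n + 2) + r).choose (n + 1) =
        (p * (n + 2) + r + 1).choose (n + 2) * (n + 2) := by
      exact_mod_cast Nat.add_one_mul_choose_eq (p * (n + 2) + r) (n + 1)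
    have pascal : (((p * (n + 2) + r + 1).choose (n + 2) : ℕ) : ℝ) =
        (p * (n + 2) + r).choose (n + 1) + (p * (n + 2) + r).choose (n + 2) := by
      exact_mod_cast Nat.choose_succ_succ' (p * (n + 2) + r) (n + 1)
    have hM : ((p * (n + 2) + r : ℕ) : ℝ) ≠ 0 := by positivity
    rw [raney_succ, raney_succ, raney_succ]
    rw [show p * (n + 1) + (r + p) = p * (n + 2) + r by ring,
      show p * (n + 1 + 1) + (r + 1) = p * (n + 2) + r + 1 by ring,
      show p * (n + 1 + 1) + r = p * (n + 2) + r by ring]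
    push_cast at hM key pascal ⊢
    field_simp
    linear_combination (-(p : ℝ)) * (p * (n + 2) + r) * key
      + (p * (n + 2) + r + 1) * r * (p * (n + 2) + r) * pascal

theorem raney_add (hp : 0 < p) (r s m : ℕ) :
    raney p (r + s) m = ∑ ij ∈ antidiagonal m, raney p r ij.1 * raney p s ij.2 := by
  induction m using Nat.strong_induction_on generalizing r with
  | _ m ihm =>
  induction r with
  | zero => cases m <;> simp [Nat.sum_antidiagonal_succ]
  | succ r ihr =>
    rcases m with _ | m
    · simp
    rw [Nat.sum_antidiagonal_succ]
    simp only [raney_succ_succ hp, add_mul, sum_add_distrib, raney_zero_right, one_mul]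
    simp only [Nat.sum_antidiagonal_succ, raney_zero_right, one_mul] at ihr
    rw [← ihm m m.lt_succ_self, ← add_assoc, ← ihr, Nat.add_right_comm, raney_succ_succ hp,
      Nat.add_right_comm r s p]

theorem raney_one (p t : ℕ) : raney (p + 1) 1 t = ((p + 1) * t).choose t / (p * t + 1) := by
  rcases t with _ | t
  · simp
  have key : (((p + 1) * (t + 1)).choose (t + 1) * ((p + 1) * (t + 1) + 1) : ℝ) =
      ((p + 1) * (t + 1) + 1).choose (t + 1) * (p * (t + 1) + 1) := by
    have := Nat.choose_mul_succ_eq ((p + 1) * (t + 1)) (t + 1)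
    rw [show (p + 1) * (t + 1) + 1 - (t + 1) = p * (t + 1) + 1 by
      rw [Nat.sub_eq_iff_eq_add (by nlinarith)]; ring] at this
    exact_mod_cast this
  rw [raney_succ, div_eq_div_iff (by positivity) (by positivity)]
  push_cast at key ⊢
  linear_combination -key

theorem sum_antidiagonal_raney_mul_pow (hp : 0 < p) (r s n : ℕ) (z : ℂ) :
    ∑ ij ∈ antidiagonal n, (raney p r ij.1 * z ^ ij.1) * (raney p s ij.2 * z ^ ij.2) =
      raney p (r + s) n * z ^ n := by
  rw [raney_add hp, Complex.ofReal_sum, sum_mul]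
  refine sum_congr rfl fun ij hij => ?_
  rw [← mem_antidiagonal.mp hij]
  push_cast
  ring

end Raney

noncomputable def raneySeries (p r : ℕ) (z : ℂ) : ℂ := ∑' n, (raney p r n : ℂ) * z ^ n

section RaneySeries

variable {p : ℕ} {z : ℂ}

theorem summable_norm_raney_mul_pow (hp : 0 < p)
    (h : Summable fun n => ‖(raney p 1 n : ℂ) * z ^ n‖) (r : ℕ) :
    Summable fun n => ‖(raney p (r + 1) n : ℂ) * z ^ n‖ := by
  induction r with
  | zero => exact h
  | succ r ih =>
    simpa only [sum_antidiagonal_raney_mul_pow hp] using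
      summable_norm_sum_mul_antidiagonal_of_summable_norm ih h

theorem raneySeries_one_pow (hp : 0 < p)
    (h : Summable fun n => ‖(raney p 1 n : ℂ) * z ^ n‖) (r : ℕ) :
    raneySeries p 1 z ^ (r + 1) = raneySeries p (r + 1) z := by
  induction r with
  | zero => rw [zero_add, pow_one]
  | succ r ih =>
    rw [pow_succ, ih, raneySeries, raneySeries,
      tsum_mul_tsum_eq_tsum_sum_antidiagonal_of_summable_norm
        (summable_norm_raney_mul_pow hp h r) h]
    simp only [sum_antidiagonal_raney_mul_pow hp]
    rfl

theorem raneySeries_one_eq (hp : 0 < p)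
    (h : Summable fun n => ‖(raney p 1 n : ℂ) * z ^ n‖) :
    raneySeries p 1 z = 1 + z * raneySeries p 1 z ^ p := by
  obtain ⟨q, rfl⟩ : ∃ q, p = q + 1 := ⟨p - 1, by omega⟩
  rw [raneySeries_one_pow hp h, raneySeries, raneySeries, h.of_norm.tsum_eq_zero_add,
    ← tsum_mul_left]
  congr 1
  · simp
  · refine tsum_congr fun n => ?_
    rw [raney_succ_succ hp 0 n, raney_zero_succ, zero_add, zero_add, pow_succ]
    ring

end RaneySeries

section FiveOne

theorem raney_five_one_succ_mul (t : ℕ) :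
    raney 5 1 (t + 1) * ((t + 1) * (4 * t + 2) * (4 * t + 3) * (4 * t + 4) * (4 * t + 5)) =
      raney 5 1 t * ((5 * t + 1) * (5 * t + 2) * (5 * t + 3) * (5 * t + 4) * (5 * t + 5)) := by
  have h := raney_one 4
  norm_num at h
  rw [h, h, Nat.cast_choose ℝ (by omega), Nat.cast_choose ℝ (by omega),
    show 5 * (t + 1) - (t + 1) = 4 * t + 1 + 1 + 1 + 1 by omega, show 5 * t - t = 4 * t by omega,
    show 5 * (t + 1) = 5 * t + 1 + 1 + 1 + 1 + 1 by ring]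
  simp only [Nat.factorial_succ]
  push_cast
  field_simp
  ring

-- At `ρ = 4⁴/5⁵` the two leading coefficients agree, and the difference of the two sides has
-- nonnegative coefficients.
theorem raney_five_one_ratio_poly_le {t : ℝ} (ht : 0 ≤ t) :
    (4 ^ 4 / 5 ^ 5) ^ 2 * ((5 * t + 1) * (5 * t + 2) * (5 * t + 3) * (5 * t + 4) * (5 * t + 5)) ^ 2
        * (t + 2) ^ 3 ≤
      ((t + 1) * (4 * t + 2) * (4 * t + 3) * (4 * t + 4) * (4 * t + 5)) ^ 2 * (t + 1) ^ 3 := by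
  rw [← sub_nonneg]
  ring_nf
  positivity

theorem sq_raney_five_one_mul_pow_le (t : ℕ) :
    (raney 5 1 t * (4 ^ 4 / 5 ^ 5) ^ t) ^ 2 * (t + 1) ^ 3 ≤ 1 := by
  induction t with
  | zero => simp
  | succ t ih =>
    have hr := raney_five_one_succ_mul t
    set ρ : ℝ := 4 ^ 4 / 5 ^ 5
    set Q4 : ℝ := (t + 1) * (4 * t + 2) * (4 * t + 3) * (4 * t + 4) * (4 * t + 5)
    set Q5 : ℝ := (5 * t + 1) * (5 * t + 2) * (5 * t + 3) * (5 * t + 4) * (5 * t + 5)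
    have hQ4 : 0 < Q4 ^ 2 := by positivity
    refine le_trans (le_of_mul_le_mul_right ?_ hQ4) ih
    calc (raney 5 1 (t + 1) * ρ ^ (t + 1)) ^ 2 * ((t + 1 : ℕ) + 1) ^ 3 * Q4 ^ 2
        = (raney 5 1 t * ρ ^ t) ^ 2 * (ρ ^ 2 * Q5 ^ 2 * (t + 2) ^ 3) := by
          push_cast
          linear_combination ρ ^ (2 * t + 2) * (t + 2) ^ 3 *
            (raney 5 1 (t + 1) * Q4 + raney 5 1 t * Q5) * hr
      _ ≤ (raney 5 1 t * ρ ^ t) ^ 2 * (Q4 ^ 2 * (t + 1) ^ 3) :=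
          mul_le_mul_of_nonneg_left (raney_five_one_ratio_poly_le t.cast_nonneg) (sq_nonneg _)
      _ = (raney 5 1 t * ρ ^ t) ^ 2 * (t + 1) ^ 3 * Q4 ^ 2 := by ring

theorem raney_five_one_mul_pow_le_rpow (t : ℕ) :
    raney 5 1 t * (4 ^ 4 / 5 ^ 5) ^ t ≤ ((t : ℝ) + 1) ^ (-(3 / 2 : ℝ)) := by
  have ht : (0 : ℝ) < t + 1 := by positivity
  have hsq : (((t : ℝ) + 1) ^ (-(3 / 2 : ℝ))) ^ 2 = (((t : ℝ) + 1) ^ 3)⁻¹ := by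
    rw [← Real.rpow_natCast, ← Real.rpow_mul ht.le, ← Real.rpow_natCast, ← Real.rpow_neg ht.le]
    norm_num
  refine le_of_sq_le_sq ?_ (by positivity)
  rw [hsq, ← one_div, le_div_iff₀ (by positivity)]
  exact sq_raney_five_one_mul_pow_le t

theorem summable_norm_raney_five_one_mul_pow {z : ℂ} (hz : ‖z‖ ≤ 4 ^ 4 / 5 ^ 5) :
    Summable fun n => ‖(raney 5 1 n : ℂ) * z ^ n‖ := by
  have hdecay : Summable fun t : ℕ => ((t : ℝ) + 1) ^ (-(3 / 2 : ℝ)) := by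
    simpa using (summable_nat_add_iff 1).2
      (Real.summable_nat_rpow.2 (by norm_num : -(3 / 2 : ℝ) < -1))
  refine hdecay.of_nonneg_of_le (fun n => norm_nonneg _) fun n => ?_
  rw [norm_mul, norm_pow, Complex.norm_real, Real.norm_of_nonneg (raney_nonneg 5 1 n)]
  calc raney 5 1 n * ‖z‖ ^ n ≤ raney 5 1 n * (4 ^ 4 / 5 ^ 5) ^ n := by
        gcongr
        exact raney_nonneg 5 1 n
    _ ≤ _ := raney_five_one_mul_pow_le_rpow n

end FiveOne

theorem fc5_eq_raney (t : ℕ) : fc5 t = raney 5 1 t := by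
  have h := raney_one 4 t
  norm_num at h
  rw [fc5, h]
  push_cast
  ring

theorem rpow_five_div_four_pow_four : ((5 : ℝ) ^ ((5 : ℝ) / 4)) ^ 4 = 5 ^ 5 := by
  rw [← Real.rpow_natCast, ← Real.rpow_mul (by norm_num)]
  norm_num

/-- For `|γ| ≤ 4/5^{5/4}`, the series `x = ∑_t A_t(5,1) γ^{4t+1}` converges absolutely
and its sum satisfies the Bring–Jerrard quintic `x^5 - x + γ = 0`. -/
theorem bring_jerrard_series (γ : ℂ)
    (hγ : ‖γ‖ ≤ 4 / (5 : ℝ) ^ ((5 : ℝ) / 4)) :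
    Summable (fun t : ℕ => ‖fc5 t * γ ^ (4 * t + 1)‖) ∧
      (∑' t : ℕ, fc5 t * γ ^ (4 * t + 1)) ^ 5 - (∑' t : ℕ, fc5 t * γ ^ (4 * t + 1)) + γ
        = 0 := by
  have hz : ‖γ ^ 4‖ ≤ 4 ^ 4 / 5 ^ 5 := by
    rw [norm_pow, ← rpow_five_div_four_pow_four, ← div_pow]
    exact pow_le_pow_left₀ (norm_nonneg γ) hγ 4
  have hsum := summable_norm_raney_five_one_mul_pow hz
  have hterm : ∀ t : ℕ, fc5 t * γ ^ (4 * t + 1) = γ * (raney 5 1 t * (γ ^ 4) ^ t) := fun t => by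
    rw [fc5_eq_raney, pow_succ, pow_mul]
    ring
  have hx : ∑' t : ℕ, fc5 t * γ ^ (4 * t + 1) = γ * raneySeries 5 1 (γ ^ 4) := by
    simp_rw [hterm]
    exact tsum_mul_left
  refine ⟨?_, ?_⟩
  · simpa only [hterm, norm_mul γ] using hsum.mul_left ‖γ‖
  · rw [hx]
    linear_combination (-γ) * raneySeries_one_eq (by norm_num) hsum
end

section
/- For positive integers m ≥ 2, n ≥ 1, and complex q with |q| < (m-1)/m^{m/(m-1)}, the series x defined by x^n-expansion q^n · ∑_{t=0}^∞ A_t(m, n) q^{(m-1)t} converges absolutely; moreover the sum y = q · ∑_{t=0}^∞ A_t(m, 1) q^{(m-1)t} satisfies Lambert's trinomial equation y = q + y^m, and y^n equals q^n · ∑_{t=0}^∞ A_t(m, n) q^{(m-1)t}. -/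
/-- Fuss–Catalan number `A_t(μ, r)` with complex parameters:
`A_0 = 1` and for `t ≥ 1`, `A_t(μ, r) = (r/t!) ∏_{j=1}^{t-1}(tμ + r - j)`. -/
noncomputable def fussCatalan (μ r : ℂ) (t : ℕ) : ℂ :=
  if t = 0 then 1
  else r / (Nat.factorial t : ℂ) *
    ∏ j ∈ Finset.Icc 1 (t - 1), ((t : ℂ) * μ + r - (j : ℂ))

/-!
The Fuss–Catalan numbers satisfy `A_{t+1}(μ, r + 1) = A_{t+1}(μ, r) + A_t(μ, r + μ)`, which for
`μ = m` gives the Vandermonde-type convolution `∑_{i+j=t} A_i(m, a) A_j(m, b) = A_t(m, a + b)`.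
Where the series converge absolutely this means `B_m(a; z) B_m(b; z) = B_m(a + b; z)`, so
`B_m(1; z)^n = B_m(n; z)`, and together with `A_{t+1}(m, 1) = A_t(m, m)` it gives
`B = 1 + z B^m` for `B = B_m(1; z)`; with `z = q^{m-1}` and `y = q B` this is `y = q + y^m`.
Absolute convergence is the ratio test: for natural parameters `A_t(m, n)` is the positive real
`n (mt+n-1)! / (t! ((m-1)t+n)!)`, whose successive ratios tend to `m^m / (m-1)^{m-1}`, and
`|q| < (m-1)/m^{m/(m-1)}` says exactly that `|q|^{m-1}` is below the reciprocal of this limit.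
-/

open Finset Filter Topology Polynomial
open scoped Nat

theorem descPochhammer_eval_succ_left {R : Type*} [CommRing R] (n : ℕ) (x : R) :
    (descPochhammer R (n + 1)).eval x = x * (descPochhammer R n).eval (x - 1) := by
  rw [descPochhammer_succ_left, eval_mul, eval_X, eval_comp, eval_sub, eval_X, eval_one]

@[simp]
theorem fussCatalan_zero (μ r : ℂ) : fussCatalan μ r 0 = 1 := if_pos rfl

theorem fussCatalan_succ (μ r : ℂ) (t : ℕ) :
    fussCatalan μ r (t + 1) =
      r / (t + 1)! * (descPochhammer ℂ t).eval ((t + 1) * μ + r - 1) := by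
  rw [fussCatalan, if_neg t.succ_ne_zero, descPochhammer_eval_eq_prod_range, Nat.add_sub_cancel,
    ← Finset.Ico_add_one_right_eq_Icc, prod_Ico_eq_prod_range, Nat.add_sub_cancel]
  push_cast
  congr 1
  exact prod_congr rfl fun j _ ↦ by ring

theorem fussCatalan_zero_succ (μ : ℂ) (t : ℕ) : fussCatalan μ 0 (t + 1) = 0 := by
  rw [fussCatalan_succ, zero_div, zero_mul]

theorem fussCatalan_add_one_succ (μ r : ℂ) (t : ℕ) :
    fussCatalan μ (r + 1) (t + 1) = fussCatalan μ r (t + 1) + fussCatalan μ (r + μ) t := by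
  rcases t with _ | s
  · simp [fussCatalan_succ]
  have hX₁ : ((s + 1 : ℕ) + 1) * μ + (r + 1) - 1 = (s + 2) * μ + r := by push_cast; ring
  have hX₂ : ((s + 1 : ℕ) + 1) * μ + r - 1 = (s + 2) * μ + r - 1 := by push_cast; ring
  have hX₃ : ((s : ℂ) + 1) * μ + (r + μ) - 1 = (s + 2) * μ + r - 1 := by ring
  have hs : (s : ℂ) + 1 + 1 ≠ 0 := by norm_cast
  have hf : ((s + 1)! : ℂ) ≠ 0 := mod_cast (s + 1).factorial_ne_zero
  rw [fussCatalan_succ, fussCatalan_succ, fussCatalan_succ, hX₁, hX₂, hX₃,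
    descPochhammer_eval_succ_left, descPochhammer_succ_eval, Nat.factorial_succ (s + 1)]
  push_cast
  field_simp
  ring

theorem sum_antidiagonal_fussCatalan_mul (m : ℕ) (a : ℂ) (b t : ℕ) :
    ∑ p ∈ antidiagonal t, fussCatalan m a p.1 * fussCatalan m b p.2 = fussCatalan m (a + b) t := by
  induction t generalizing b with
  | zero => simp
  | succ t ih =>
    induction b with
    | zero => simp [Nat.sum_antidiagonal_succ', fussCatalan_zero_succ]
    | succ b ihb =>
      have hsplit : ∀ p : ℕ × ℕ, fussCatalan m a p.1 * fussCatalan m ((b + 1 : ℕ) : ℂ) (p.2 + 1) =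
          fussCatalan m a p.1 * fussCatalan m b (p.2 + 1) +
            fussCatalan m a p.1 * fussCatalan m ((b + m : ℕ) : ℂ) p.2 := by
        intro p
        push_cast
        rw [fussCatalan_add_one_succ, mul_add]
      rw [Nat.sum_antidiagonal_succ', fussCatalan_zero] at ihb
      rw [Nat.sum_antidiagonal_succ', sum_congr rfl fun p _ ↦ hsplit p, sum_add_distrib, ih,
        ← add_assoc, fussCatalan_zero, ihb]
      push_cast
      rw [← add_assoc, ← add_assoc, fussCatalan_add_one_succ]

noncomputable def fussCatalanFactorial (m n t : ℕ) : ℝ :=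
  n * (m * t + n - 1)! / (t ! * ((m - 1) * t + n)!)

theorem fussCatalanFactorial_pos {n : ℕ} (m : ℕ) (hn : 1 ≤ n) (t : ℕ) :
    0 < fussCatalanFactorial m n t := by
  unfold fussCatalanFactorial
  have : (0 : ℝ) < n := by exact_mod_cast hn
  positivity

theorem fussCatalan_natCast {m n : ℕ} (hm : 1 ≤ m) (hn : 1 ≤ n) (t : ℕ) :
    fussCatalan m n t = fussCatalanFactorial m n t := by
  obtain ⟨k, rfl⟩ := Nat.exists_eq_add_of_le' hm
  obtain ⟨l, rfl⟩ := Nat.exists_eq_add_of_le' hn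
  rcases t with _ | t
  · simp only [fussCatalan_zero, fussCatalanFactorial, mul_zero, zero_add, Nat.add_sub_cancel,
      Nat.factorial_zero, Nat.cast_one, one_mul, ← Nat.cast_mul, ← Nat.factorial_succ]
    rw [div_self (by positivity), Complex.ofReal_one]
  set M := k * (t + 1) + l + 1
  have hM : (k + 1) * (t + 1) + (l + 1) - 1 = M + t := by
    have : (k + 1) * (t + 1) = k * (t + 1) + t + 1 := by ring
    omega
  have hMc : ((t : ℂ) + 1) * ((k + 1 : ℕ) : ℂ) + ((l + 1 : ℕ) : ℂ) - 1 = ((M + t : ℕ) : ℂ) := by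
    simp only [M]; push_cast; ring
  have hfac := Nat.factorial_mul_ascFactorial M t
  rw [fussCatalan_succ, hMc, descPochhammer_eval_eq_descFactorial,
    Nat.add_descFactorial_eq_ascFactorial, fussCatalanFactorial, hM, Nat.add_sub_cancel,
    show k * (t + 1) + (l + 1) = M from rfl, ← hfac]
  push_cast
  rw [mul_comm (M ! : ℂ), ← mul_assoc, mul_div_mul_right _ _ (mod_cast M.factorial_ne_zero),
    div_mul_eq_mul_div]

theorem fussCatalanFactorial_succ_mul {n : ℕ} (m : ℕ) (hn : 1 ≤ n) (t : ℕ) :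
    fussCatalanFactorial m n (t + 1) * ((t + 1) * ((m - 1) * t + n + 1).ascFactorial (m - 1)) =
      fussCatalanFactorial m n t * (m * t + n).ascFactorial m := by
  obtain ⟨l, rfl⟩ := Nat.exists_eq_add_of_le' hn
  have hnum : (m * t + l)! * (m * t + (l + 1)).ascFactorial m = (m * (t + 1) + (l + 1) - 1)! := by
    rw [← add_assoc, Nat.factorial_mul_ascFactorial, Nat.mul_succ]; congr 1; omega
  have hden : ((m - 1) * t + (l + 1))! * ((m - 1) * t + (l + 1) + 1).ascFactorial (m - 1) =
      ((m - 1) * (t + 1) + (l + 1))! := by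
    rw [Nat.factorial_mul_ascFactorial, Nat.mul_succ]; congr 1; omega
  have hnum' : m * t + (l + 1) - 1 = m * t + l := by omega
  unfold fussCatalanFactorial
  rw [← hnum, ← hden, Nat.factorial_succ t, hnum']
  have : ((m * t + l)! : ℝ) ≠ 0 := by positivity
  have : (((m - 1) * t + (l + 1))! : ℝ) ≠ 0 := by positivity
  have : (t ! : ℝ) ≠ 0 := by positivity
  have : ((((m - 1) * t + (l + 1) + 1).ascFactorial (m - 1)) : ℝ) ≠ 0 := by positivity
  push_cast
  field_simp

theorem tendsto_natCast_mul_add_div_add_one (c b : ℕ) :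
    Tendsto (fun t : ℕ ↦ ((c * t + b : ℕ) : ℝ) / (t + 1)) atTop (𝓝 c) := by
  have h := ((tendsto_natCast_div_add_atTop (1 : ℝ)).const_mul (c : ℝ)).add
    ((tendsto_one_div_add_atTop_nhds_zero_nat (𝕜 := ℝ)).const_mul (b : ℝ))
  rw [mul_one, mul_zero, add_zero] at h
  refine h.congr fun t ↦ ?_
  push_cast
  ring

theorem tendsto_ascFactorial_div_pow (c b k : ℕ) :
    Tendsto (fun t : ℕ ↦ ((c * t + b).ascFactorial k : ℝ) / ((t : ℝ) + 1) ^ k) atTop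
      (𝓝 ((c : ℝ) ^ k)) := by
  induction k with
  | zero => simp
  | succ k ih =>
    rw [pow_succ']
    refine ((tendsto_natCast_mul_add_div_add_one c (b + k)).mul ih).congr fun t ↦ ?_
    rw [Nat.ascFactorial_succ, Nat.cast_mul, pow_succ', mul_div_mul_comm, add_assoc]

noncomputable def fussCatalanGrowth (m : ℕ) : ℝ := (m : ℝ) ^ m / ((m : ℝ) - 1) ^ (m - 1)

theorem tendsto_fussCatalanFactorial_ratio {m n : ℕ} (hm : 1 ≤ m) (hn : 1 ≤ n) :
    Tendsto (fun t ↦ fussCatalanFactorial m n (t + 1) / fussCatalanFactorial m n t) atTop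
      (𝓝 (fussCatalanGrowth m)) := by
  have hlim := (tendsto_ascFactorial_div_pow m n m).div
    (tendsto_ascFactorial_div_pow (m - 1) (n + 1) (m - 1)) (mod_cast Nat.pow_self_pos.ne')
  rw [Nat.cast_pred hm, ← fussCatalanGrowth] at hlim
  obtain ⟨k, rfl⟩ := Nat.exists_eq_add_of_le' hm
  refine hlim.congr fun t ↦ ?_
  have hrec := fussCatalanFactorial_succ_mul (k + 1) hn t
  have h₀ := fussCatalanFactorial_pos (k + 1) hn t
  have hD : 0 < ((k * t + n + 1).ascFactorial k : ℝ) := mod_cast Nat.ascFactorial_pos _ _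
  simp only [Nat.add_sub_cancel, Pi.div_apply, ← add_assoc] at hrec ⊢
  field_simp
  linear_combination (-((t : ℝ) + 1) ^ k) * hrec

theorem summable_mul_pow_of_tendsto_ratio {a : ℕ → ℝ} {L x : ℝ} (ha : ∀ t, 0 < a t)
    (hL : Tendsto (fun t ↦ a (t + 1) / a t) atTop (𝓝 L)) (hx : 0 ≤ x) (hLx : L * x < 1) :
    Summable fun t ↦ a t * x ^ t := by
  obtain ⟨r, hLr, hr⟩ := exists_between hLx
  refine summable_of_ratio_norm_eventually_le hr ?_
  filter_upwards [(hL.mul_const x).eventually_lt_const hLr] with t ht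
  have hat := ha t
  have hat₁ := ha (t + 1)
  rw [Real.norm_of_nonneg (by positivity), Real.norm_of_nonneg (by positivity)]
  calc a (t + 1) * x ^ (t + 1) = a (t + 1) / a t * x * (a t * x ^ t) := by field_simp; ring
    _ ≤ r * (a t * x ^ t) := by gcongr

theorem summable_norm_fussCatalan_mul_pow {m : ℕ} (hm : 1 ≤ m) (n : ℕ) {z : ℂ}
    (hz : fussCatalanGrowth m * ‖z‖ < 1) :
    Summable fun t ↦ ‖fussCatalan m n t * z ^ t‖ := by
  rcases Nat.eq_zero_or_pos n with rfl | hn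
  · refine summable_of_ne_finset_zero (s := {0}) fun t ht ↦ ?_
    obtain ⟨s, rfl⟩ := Nat.exists_eq_succ_of_ne_zero (Finset.notMem_singleton.mp ht)
    simp [fussCatalan_zero_succ]
  refine (summable_mul_pow_of_tendsto_ratio (fussCatalanFactorial_pos m hn)
    (tendsto_fussCatalanFactorial_ratio hm hn) (norm_nonneg z) hz).congr fun t ↦ ?_
  rw [norm_mul, norm_pow, fussCatalan_natCast hm hn, Complex.norm_real,
    Real.norm_of_nonneg (fussCatalanFactorial_pos m hn t).le]

noncomputable def fussCatalanSeries (μ r z : ℂ) : ℂ := ∑' t, fussCatalan μ r t * z ^ t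

theorem fussCatalanSeries_zero (μ z : ℂ) : fussCatalanSeries μ 0 z = 1 := by
  rw [fussCatalanSeries, tsum_eq_single 0 fun t ht ↦ ?_, fussCatalan_zero, pow_zero, mul_one]
  obtain ⟨s, rfl⟩ := Nat.exists_eq_succ_of_ne_zero ht
  rw [fussCatalan_zero_succ, zero_mul]

section Convergent

variable {m : ℕ} {z : ℂ}

theorem fussCatalanSeries_mul (hm : 1 ≤ m)
    (hz : fussCatalanGrowth m * ‖z‖ < 1) (a b : ℕ) :
    fussCatalanSeries m a z * fussCatalanSeries m b z = fussCatalanSeries m (a + b) z := by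
  rw [fussCatalanSeries, fussCatalanSeries, tsum_mul_tsum_eq_tsum_sum_antidiagonal_of_summable_norm
    (summable_norm_fussCatalan_mul_pow hm a hz) (summable_norm_fussCatalan_mul_pow hm b hz)]
  refine tsum_congr fun t ↦ ?_
  rw [← sum_antidiagonal_fussCatalan_mul, sum_mul]
  refine sum_congr rfl fun p hp ↦ ?_
  rw [← mem_antidiagonal.mp hp, pow_add]
  ring

theorem fussCatalanSeries_one_pow (hm : 1 ≤ m)
    (hz : fussCatalanGrowth m * ‖z‖ < 1) (n : ℕ) :
    fussCatalanSeries m 1 z ^ n = fussCatalanSeries m n z := by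
  induction n with
  | zero => rw [pow_zero, Nat.cast_zero, fussCatalanSeries_zero]
  | succ n ih =>
    rw [pow_succ, ih, Nat.cast_succ]
    exact_mod_cast fussCatalanSeries_mul hm hz n 1

theorem fussCatalanSeries_one_eq (hm : 1 ≤ m)
    (hz : fussCatalanGrowth m * ‖z‖ < 1) :
    fussCatalanSeries m 1 z = 1 + z * fussCatalanSeries m 1 z ^ m := by
  have hshift (t : ℕ) : fussCatalan m 1 (t + 1) = fussCatalan m m t := by
    simpa [fussCatalan_zero_succ] using fussCatalan_add_one_succ m 0 t
  have hsum := (summable_norm_fussCatalan_mul_pow hm 1 hz).of_norm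
  rw [Nat.cast_one] at hsum
  rw [fussCatalanSeries_one_pow hm hz, fussCatalanSeries, fussCatalanSeries, hsum.tsum_eq_zero_add,
    ← tsum_mul_left]
  simp only [fussCatalan_zero, pow_zero, mul_one, hshift, pow_succ]
  congr 1
  exact tsum_congr fun t ↦ by ring

end Convergent

theorem fussCatalanGrowth_mul_pow_lt_one {m : ℕ} (hm : 2 ≤ m) {x : ℝ} (hx₀ : 0 ≤ x)
    (hx : x < ((m : ℝ) - 1) / (m : ℝ) ^ ((m : ℝ) / ((m : ℝ) - 1))) :
    fussCatalanGrowth m * x ^ (m - 1) < 1 := by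
  have hm₁ : (0 : ℝ) < m - 1 := by
    have : (2 : ℝ) ≤ m := mod_cast hm
    linarith
  have hradius : (((m : ℝ) - 1) / (m : ℝ) ^ ((m : ℝ) / ((m : ℝ) - 1))) ^ (m - 1) =
      ((m : ℝ) - 1) ^ (m - 1) / (m : ℝ) ^ m := by
    rw [div_pow, ← Real.rpow_natCast (_ ^ _) (m - 1), ← Real.rpow_mul (by positivity),
      Nat.cast_pred (by omega), div_mul_cancel₀ _ hm₁.ne', Real.rpow_natCast]
  calc fussCatalanGrowth m * x ^ (m - 1)
      < fussCatalanGrowth m * (((m : ℝ) - 1) / (m : ℝ) ^ ((m : ℝ) / ((m : ℝ) - 1))) ^ (m - 1) := by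
        unfold fussCatalanGrowth
        gcongr
        omega
    _ = 1 := by
        rw [hradius, fussCatalanGrowth]
        field_simp

theorem lambert_trinomial_series_general (m n : ℕ) (hm : 2 ≤ m) (q : ℂ)
    (hq : ‖q‖ < ((m : ℝ) - 1) / (m : ℝ) ^ ((m : ℝ) / ((m : ℝ) - 1))) :
    Summable (fun t : ℕ =>
      ‖q ^ n * (fussCatalan (m : ℂ) (n : ℂ) t * q ^ ((m - 1) * t))‖) ∧
    (q * ∑' t : ℕ, fussCatalan (m : ℂ) 1 t * q ^ ((m - 1) * t)) =
      q + (q * ∑' t : ℕ, fussCatalan (m : ℂ) 1 t * q ^ ((m - 1) * t)) ^ m ∧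
    (q * ∑' t : ℕ, fussCatalan (m : ℂ) 1 t * q ^ ((m - 1) * t)) ^ n =
      q ^ n * ∑' t : ℕ, fussCatalan (m : ℂ) (n : ℂ) t * q ^ ((m - 1) * t) := by
  have hm₁ : 1 ≤ m := by omega
  have hz : fussCatalanGrowth m * ‖q ^ (m - 1)‖ < 1 := by
    rw [norm_pow]
    exact fussCatalanGrowth_mul_pow_lt_one hm (norm_nonneg q) hq
  have hseries (r : ℂ) : ∑' t : ℕ, fussCatalan m r t * q ^ ((m - 1) * t) =
      fussCatalanSeries m r (q ^ (m - 1)) := by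
    simp only [pow_mul, fussCatalanSeries]
  rw [hseries, hseries]
  refine ⟨?_, ?_, ?_⟩
  · refine ((summable_norm_fussCatalan_mul_pow hm₁ n hz).mul_left (‖q‖ ^ n)).congr fun t ↦ ?_
    simp only [norm_mul, norm_pow, pow_mul]
  · conv_lhs => rw [fussCatalanSeries_one_eq hm₁ hz]
    rw [mul_pow, ← mul_pow_sub_one (by omega : m ≠ 0) q]
    ring
  · rw [mul_pow, fussCatalanSeries_one_pow hm₁ hz]

/-- For `m ≥ 2`, `n ≥ 1` and `|q| < (m-1)/m^{m/(m-1)}`, the series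
`q^n ∑_t A_t(m,n) q^{(m-1)t}` converges absolutely; the sum
`y = q ∑_t A_t(m,1) q^{(m-1)t}` satisfies Lambert's trinomial `y = q + y^m`,
and `y^n = q^n ∑_t A_t(m,n) q^{(m-1)t}`. -/
theorem lambert_trinomial_series (m n : ℕ) (hm : 2 ≤ m) (hn : 1 ≤ n) (q : ℂ)
    (hq : ‖q‖ < ((m : ℝ) - 1) / (m : ℝ) ^ ((m : ℝ) / ((m : ℝ) - 1))) :
    Summable (fun t : ℕ =>
      ‖q ^ n * (fussCatalan (m : ℂ) (n : ℂ) t * q ^ ((m - 1) * t))‖) ∧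
    (q * ∑' t : ℕ, fussCatalan (m : ℂ) 1 t * q ^ ((m - 1) * t)) =
      q + (q * ∑' t : ℕ, fussCatalan (m : ℂ) 1 t * q ^ ((m - 1) * t)) ^ m ∧
    (q * ∑' t : ℕ, fussCatalan (m : ℂ) 1 t * q ^ ((m - 1) * t)) ^ n =
      q ^ n * ∑' t : ℕ, fussCatalan (m : ℂ) (n : ℂ) t * q ^ ((m - 1) * t) :=
  lambert_trinomial_series_general m n hm q hq
end
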